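/- Let X and Y be positive bounded operators on a complex Hilbert space H and q ∈ ℂ with 0 < |q| ≤ 1. Then (|q|/2)·‖X+Y‖ ≤ w_q([[0, X],[Y, 0]]) ≤ (|q|/2)·‖X+Y‖ + √(1−|q|²)·max{‖X‖, ‖Y‖}. -/

import Mathlib

noncomputable def qNumRadius {H : Type*} [NormedAddCommGroup H] [InnerProductSpace ℂ H]
    (q : ℂ) (T : H →L[ℂ] H) : ℝ :=
  sSup {r : ℝ | ∃ x y : H, ‖x‖ = 1 ∧ ‖y‖ = 1 ∧ (inner ℂ y x : ℂ) = q ∧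
    r = ‖(inner ℂ y (T x) : ℂ)‖}

/-- The `2 × 2` block operator matrix `[[Z, X],[Y, W]]` acting on `H ⊕ H`
(the `ℓ²` direct sum `WithLp 2 (H × H)`). -/
noncomputable def block2 {H : Type*} [NormedAddCommGroup H] [InnerProductSpace ℂ H]
    (Z X Y W : H →L[ℂ] H) : WithLp 2 (H × H) →L[ℂ] WithLp 2 (H × H) :=
  (((WithLp.prodContinuousLinearEquiv 2 ℂ H H).symm : (H × H) →L[ℂ] WithLp 2 (H × H)).comp
    ((Z.comp (ContinuousLinearMap.fst ℂ H H) + X.comp (ContinuousLinearMap.snd ℂ H H)).prod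
      (Y.comp (ContinuousLinearMap.fst ℂ H H) + W.comp (ContinuousLinearMap.snd ℂ H H)))).comp
    ((WithLp.prodContinuousLinearEquiv 2 ℂ H H : WithLp 2 (H × H) →L[ℂ] (H × H)))

/-!
For unit `x`, the unit vectors `y` with `⟪y, x⟫ = q` are exactly `conj q • x + v` with `v ⊥ x`
and `‖v‖ = √(1 - ‖q‖²)`, and then `⟪y, T x⟫ = q ⟪x, T x⟫ + ⟪v, T x⟫`.

For `T = [[0, X], [Y, 0]]` with `X, Y ≥ 0`, Cauchy–Schwarz for the semi-inner products
`⟪X ·, ·⟫`, `⟪Y ·, ·⟫` followed by AM–GM gives `|⟪x, T x⟫| ≤ ‖X + Y‖ / 2 · ‖x‖²`, and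
`‖T‖ ≤ max ‖X‖ ‖Y‖`; this is the upper bound.

For the lower bound take `x = (u, u)/√2`, so that `⟪x, T x⟫ = ⟪u, (X + Y) u⟫ / 2`, and
`v = ±√(1 - ‖q‖²) z` with `z = (u, -u)/√2 ⊥ x`: since `2|a| ≤ |a + b| + |a - b|`, one of the signs
gives `|⟪y, T x⟫| ≥ ‖q‖ |⟪x, T x⟫|`. The supremum over unit `u` of `⟪(X + Y) u, u⟫` is `‖X + Y‖`.
-/

open scoped InnerProductSpace ComplexConjugate

section

variable {E : Type*} [NormedAddCommGroup E] [InnerProductSpace ℂ E]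

lemma ContinuousLinearMap.re_inner_apply_self_le (T : E →L[ℂ] E) (x : E) :
    (⟪T x, x⟫_ℂ).re ≤ ‖T‖ * ‖x‖ ^ 2 := by
  calc (⟪T x, x⟫_ℂ).re ≤ ‖T x‖ * ‖x‖ := (Complex.re_le_norm _).trans (norm_inner_le_norm _ _)
    _ ≤ ‖T‖ * ‖x‖ * ‖x‖ := by grw [T.le_opNorm]
    _ = ‖T‖ * ‖x‖ ^ 2 := by ring

lemma ContinuousLinearMap.norm_le_of_abs_re_inner_self_le {T : E →L[ℂ] E}
    (hT : (T : E →ₗ[ℂ] E).IsSymmetric) {c : ℝ} (hc : 0 ≤ c)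
    (h : ∀ u : E, ‖u‖ = 1 → |(⟪T u, u⟫_ℂ).re| ≤ c) : ‖T‖ ≤ c := by
  rw [T.norm_eq_iSup_rayleighQuotient hT]
  refine ciSup_le fun x => ?_
  rcases eq_or_ne x 0 with rfl | hx
  · simpa using hc
  have hx' : ((‖x‖⁻¹ : ℝ) : ℂ) ≠ 0 := by simpa using hx
  rw [← T.rayleigh_smul x hx']
  have hu : ‖((‖x‖⁻¹ : ℝ) : ℂ) • x‖ = 1 := by simp [norm_smul, hx]
  rw [ContinuousLinearMap.rayleighQuotient, hu, one_pow, div_one, T.reApplyInnerSelf_apply]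
  exact h _ hu

lemma qNumRadius_nonneg (q : ℂ) (T : E →L[ℂ] E) : 0 ≤ qNumRadius q T :=
  Real.sSup_nonneg (by rintro r ⟨_, _, _, _, _, rfl⟩; positivity)

lemma norm_inner_le_qNumRadius (T : E →L[ℂ] E) {x y : E} (hx : ‖x‖ = 1) (hy : ‖y‖ = 1) :
    ‖⟪y, T x⟫_ℂ‖ ≤ qNumRadius ⟪y, x⟫_ℂ T := by
  refine le_csSup ⟨‖T‖, ?_⟩ ⟨x, y, hx, hy, rfl, rfl⟩
  rintro r ⟨x, y, hx, hy, -, rfl⟩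
  calc ‖⟪y, T x⟫_ℂ‖ ≤ ‖y‖ * ‖T x‖ := norm_inner_le_norm _ _
    _ ≤ ‖T‖ := by grw [hy, one_mul, T.le_opNorm, hx, mul_one]

lemma qNumRadius_le {q : ℂ} {T : E →L[ℂ] E} {B : ℝ} (hB : 0 ≤ B)
    (h : ∀ x y : E, ‖x‖ = 1 → ‖y‖ = 1 → ⟪y, x⟫_ℂ = q → ‖⟪y, T x⟫_ℂ‖ ≤ B) :
    qNumRadius q T ≤ B :=
  Real.sSup_le (by rintro r ⟨x, y, hx, hy, hyx, rfl⟩; exact h x y hx hy hyx) hB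

lemma inner_conj_smul_add_left_self (q : ℂ) {x v : E} (hx : ‖x‖ = 1) (hvx : ⟪v, x⟫_ℂ = 0) :
    ⟪conj q • x + v, x⟫_ℂ = q := by
  rw [inner_add_left, inner_smul_left, Complex.conj_conj, hvx, inner_self_eq_norm_sq_to_K, hx]
  simp

lemma norm_conj_smul_add_sq (q : ℂ) {x v : E} (hx : ‖x‖ = 1) (hvx : ⟪v, x⟫_ℂ = 0) :
    ‖conj q • x + v‖ ^ 2 = ‖q‖ ^ 2 + ‖v‖ ^ 2 := by
  have hxv : ⟪conj q • x, v⟫_ℂ = 0 := by rw [inner_smul_left, ← inner_conj_symm, hvx]; simp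
  rw [sq, sq, sq, norm_add_sq_eq_norm_sq_add_norm_sq_of_inner_eq_zero _ _ hxv, norm_smul, hx,
    Complex.norm_conj, mul_one]

lemma inner_conj_smul_add_left (T : E →L[ℂ] E) (q : ℂ) (x v : E) :
    ⟪conj q • x + v, T x⟫_ℂ = q * ⟪x, T x⟫_ℂ + ⟪v, T x⟫_ℂ := by
  rw [inner_add_left, inner_smul_left, Complex.conj_conj]

lemma qNumRadius_le_mul_add_mul_norm {q : ℂ} {T : E →L[ℂ] E} {w : ℝ} (hw : 0 ≤ w)
    (h : ∀ x : E, ‖x‖ = 1 → ‖⟪x, T x⟫_ℂ‖ ≤ w) :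
    qNumRadius q T ≤ ‖q‖ * w + √(1 - ‖q‖ ^ 2) * ‖T‖ := by
  refine qNumRadius_le (by positivity) fun x y hx hy hyx => ?_
  set v := y - conj q • x
  have hy_eq : y = conj q • x + v := by simp [v]
  have hvx : ⟪v, x⟫_ℂ = 0 := by simp [v, hyx, inner_self_eq_norm_sq_to_K, hx]
  have hv : ‖v‖ = √(1 - ‖q‖ ^ 2) := by
    have hv2 := norm_conj_smul_add_sq q hx hvx
    rw [← hy_eq, hy, one_pow] at hv2
    rw [← Real.sqrt_sq (norm_nonneg v)]
    congr 1
    linarith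
  calc ‖⟪y, T x⟫_ℂ‖ = ‖q * ⟪x, T x⟫_ℂ + ⟪v, T x⟫_ℂ‖ := by rw [hy_eq, inner_conj_smul_add_left]
    _ ≤ ‖q‖ * ‖⟪x, T x⟫_ℂ‖ + ‖v‖ * ‖T x‖ := by
      grw [norm_add_le, norm_mul, norm_inner_le_norm v]
    _ ≤ ‖q‖ * w + √(1 - ‖q‖ ^ 2) * ‖T‖ := by
      grw [h x hx, T.le_opNorm, hx, mul_one, hv]

lemma mul_norm_inner_self_le_qNumRadius {q : ℂ} (hq : ‖q‖ ≤ 1) (T : E →L[ℂ] E) {x z : E}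
    (hx : ‖x‖ = 1) (hz : ‖z‖ = 1) (hzx : ⟪z, x⟫_ℂ = 0) :
    ‖q‖ * ‖⟪x, T x⟫_ℂ‖ ≤ qNumRadius q T := by
  have key : ∀ v : E, ‖v‖ = √(1 - ‖q‖ ^ 2) → ⟪v, x⟫_ℂ = 0 →
      ‖q * ⟪x, T x⟫_ℂ + ⟪v, T x⟫_ℂ‖ ≤ qNumRadius q T := fun v hv hvx => by
    have hy : ‖conj q • x + v‖ = 1 := by
      rw [← pow_eq_one_iff_of_nonneg (norm_nonneg _) two_ne_zero, norm_conj_smul_add_sq q hx hvx,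
        hv, Real.sq_sqrt (by nlinarith [norm_nonneg q])]
      ring
    have := norm_inner_le_qNumRadius T hx hy
    rwa [inner_conj_smul_add_left, inner_conj_smul_add_left_self q hx hvx] at this
  set v := (√(1 - ‖q‖ ^ 2) : ℂ) • z
  have hv : ‖v‖ = √(1 - ‖q‖ ^ 2) := by simp [v, norm_smul, hz]
  have hvx : ⟪v, x⟫_ℂ = 0 := by simp [v, hzx]
  have hplus := key v hv hvx
  have hminus := key (-v) (by rw [norm_neg, hv]) (by rw [inner_neg_left, hvx, neg_zero])
  rw [inner_neg_left, ← sub_eq_add_neg] at hminus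
  have htri := norm_add_le (q * ⟪x, T x⟫_ℂ + ⟪v, T x⟫_ℂ) (q * ⟪x, T x⟫_ℂ - ⟪v, T x⟫_ℂ)
  rw [add_add_sub_cancel, ← two_mul, norm_mul, norm_mul, Complex.norm_two] at htri
  linarith

end

section

variable {H : Type*} [NormedAddCommGroup H] [InnerProductSpace ℂ H]

lemma ContinuousLinearMap.IsPositive.two_mul_norm_inner_le [CompleteSpace H] {S : H →L[ℂ] H}
    (hS : S.IsPositive) (x y : H) :
    2 * ‖⟪S x, y⟫_ℂ‖ ≤ (⟪S x, x⟫_ℂ).re + (⟪S y, y⟫_ℂ).re := by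
  have hS0 : 0 ≤ S := (ContinuousLinearMap.nonneg_iff_isPositive S).mpr hS
  set R := CFC.sqrt S
  have hR : IsSelfAdjoint R := IsSelfAdjoint.of_nonneg (CFC.sqrt_nonneg S)
  have hRR : ∀ a b : H, ⟪S a, b⟫_ℂ = ⟪R a, R b⟫_ℂ := fun a b => by
    rw [← CFC.sqrt_mul_sqrt_self S hS0, mul_apply_eq_comp,
      ← ContinuousLinearMap.adjoint_inner_left, hR.adjoint_eq]
  simp only [hRR, ← RCLike.re_to_complex, inner_self_eq_norm_sq]
  nlinarith [norm_inner_le_norm (𝕜 := ℂ) (R x) (R y), sq_nonneg (‖R x‖ - ‖R y‖)]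

lemma block2_zero_apply (X Y : H →L[ℂ] H) (x : WithLp 2 (H × H)) :
    block2 0 X Y 0 x = WithLp.toLp 2 (X x.snd, Y x.fst) := by
  simp [block2]

lemma inner_block2_zero (X Y : H →L[ℂ] H) (x y : WithLp 2 (H × H)) :
    ⟪y, block2 0 X Y 0 x⟫_ℂ = ⟪y.fst, X x.snd⟫_ℂ + ⟪y.snd, Y x.fst⟫_ℂ := by
  rw [block2_zero_apply, WithLp.prod_inner_apply]
  rfl

lemma norm_block2_zero_le (X Y : H →L[ℂ] H) : ‖block2 0 X Y 0‖ ≤ max ‖X‖ ‖Y‖ := by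
  refine ContinuousLinearMap.opNorm_le_bound _ (by positivity) fun x => ?_
  rw [← sq_le_sq₀ (norm_nonneg _) (by positivity), block2_zero_apply, mul_pow,
    WithLp.prod_norm_sq_eq_of_L2, WithLp.prod_norm_sq_eq_of_L2]
  simp only [WithLp.toLp_fst, WithLp.toLp_snd]
  have hX : ‖X x.snd‖ ≤ max ‖X‖ ‖Y‖ * ‖x.snd‖ := by grw [X.le_opNorm, ← le_max_left]
  have hY : ‖Y x.fst‖ ≤ max ‖X‖ ‖Y‖ * ‖x.fst‖ := by grw [Y.le_opNorm, ← le_max_right]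
  nlinarith [norm_nonneg (X x.snd), norm_nonneg (Y x.fst)]

lemma norm_inner_block2_zero_self_le [CompleteSpace H] {X Y : H →L[ℂ] H} (hX : X.IsPositive)
    (hY : Y.IsPositive) (x : WithLp 2 (H × H)) :
    ‖⟪x, block2 0 X Y 0 x⟫_ℂ‖ ≤ ‖X + Y‖ / 2 * ‖x‖ ^ 2 := by
  have hXx : 2 * ‖⟪x.fst, X x.snd⟫_ℂ‖ ≤ (⟪X x.snd, x.snd⟫_ℂ).re + (⟪X x.fst, x.fst⟫_ℂ).re := by
    rw [← inner_conj_symm, Complex.norm_conj]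
    exact hX.two_mul_norm_inner_le _ _
  have hYx : 2 * ‖⟪x.snd, Y x.fst⟫_ℂ‖ ≤ (⟪Y x.fst, x.fst⟫_ℂ).re + (⟪Y x.snd, x.snd⟫_ℂ).re := by
    rw [← inner_conj_symm, Complex.norm_conj]
    exact hY.two_mul_norm_inner_le _ _
  have hsum (v : H) : (⟪(X + Y) v, v⟫_ℂ).re = (⟪X v, v⟫_ℂ).re + (⟪Y v, v⟫_ℂ).re := by
    rw [add_apply, inner_add_left, Complex.add_re]
  have h1 := (X + Y).re_inner_apply_self_le x.fst
  have h2 := (X + Y).re_inner_apply_self_le x.snd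
  rw [inner_block2_zero, WithLp.prod_norm_sq_eq_of_L2]
  linarith [norm_add_le ⟪x.fst, X x.snd⟫_ℂ ⟪x.snd, Y x.fst⟫_ℂ, hsum x.fst, hsum x.snd]

lemma mul_re_inner_le_qNumRadius_block2 {q : ℂ} (hq : ‖q‖ ≤ 1) (X Y : H →L[ℂ] H) {u : H}
    (hu : ‖u‖ = 1) : ‖q‖ * ((⟪(X + Y) u, u⟫_ℂ).re / 2) ≤ qNumRadius q (block2 0 X Y 0) := by
  set a : ℂ := (((√2)⁻¹ : ℝ) : ℂ)
  have ha : conj a * a = 1 / 2 := by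
    simp only [a, Complex.conj_ofReal, ← Complex.ofReal_mul, ← mul_inv,
      Real.mul_self_sqrt zero_le_two]
    norm_num
  have ha' : ‖a‖ ^ 2 = 1 / 2 := by
    rw [← Complex.ofReal_inj, Complex.ofReal_pow, ← Complex.conj_mul', ha]; norm_num
  set x : WithLp 2 (H × H) := WithLp.toLp 2 (a • u, a • u)
  set z : WithLp 2 (H × H) := WithLp.toLp 2 (a • u, -(a • u))
  have hx : ‖x‖ = 1 := by
    rw [← pow_eq_one_iff_of_nonneg (norm_nonneg _) two_ne_zero, WithLp.prod_norm_sq_eq_of_L2]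
    simp [x, norm_smul, ha', hu]
    norm_num
  have hz : ‖z‖ = 1 := by
    rw [← pow_eq_one_iff_of_nonneg (norm_nonneg _) two_ne_zero, WithLp.prod_norm_sq_eq_of_L2]
    simp [z, norm_smul, ha', hu]
    norm_num
  have hzx : ⟪z, x⟫_ℂ = 0 := by simp [x, z]
  have hxTx : ⟪x, block2 0 X Y 0 x⟫_ℂ = ⟪u, (X + Y) u⟫_ℂ / 2 := by
    simp only [x, inner_block2_zero, WithLp.toLp_fst, WithLp.toLp_snd, map_smul, inner_smul_left,
      inner_smul_right, add_apply, inner_add_right]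
    linear_combination (⟪u, X u⟫_ℂ + ⟪u, Y u⟫_ℂ) * ha
  calc ‖q‖ * ((⟪(X + Y) u, u⟫_ℂ).re / 2) ≤ ‖q‖ * ‖⟪x, block2 0 X Y 0 x⟫_ℂ‖ := by
        rw [hxTx, ← RCLike.re_to_complex, inner_re_symm, RCLike.re_to_complex]
        gcongr
        simpa only [Complex.div_ofNat_re, norm_div, Complex.norm_ofNat] using
          Complex.re_le_norm (⟪u, (X + Y) u⟫_ℂ / 2)
    _ ≤ qNumRadius q (block2 0 X Y 0) := mul_norm_inner_self_le_qNumRadius hq _ hx hz hzx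

end

theorem stmt17 {H : Type*} [NormedAddCommGroup H] [InnerProductSpace ℂ H] [CompleteSpace H]
    (X Y : H →L[ℂ] H) (hX : X.IsPositive) (hY : Y.IsPositive)
    (q : ℂ) (hq : 0 < ‖q‖) (hq1 : ‖q‖ ≤ 1) :
    ‖q‖ / 2 * ‖X + Y‖ ≤ qNumRadius q (block2 0 X Y 0) ∧
      qNumRadius q (block2 0 X Y 0) ≤
        ‖q‖ / 2 * ‖X + Y‖ + Real.sqrt (1 - ‖q‖ ^ 2) * max ‖X‖ ‖Y‖ := by
  have hXY : (X + Y).IsPositive := hX.add hY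
  constructor
  · have hw := qNumRadius_nonneg q (block2 0 X Y 0)
    have hnorm : ‖X + Y‖ ≤ 2 * qNumRadius q (block2 0 X Y 0) / ‖q‖ := by
      refine (X + Y).norm_le_of_abs_re_inner_self_le hXY.isSymmetric (by positivity) fun u hu => ?_
      have hre : 0 ≤ (⟪(X + Y) u, u⟫_ℂ).re := hXY.re_inner_nonneg_left u
      rw [abs_of_nonneg hre, le_div_iff₀ hq]
      linarith [mul_re_inner_le_qNumRadius_block2 hq1 X Y hu]
    rw [le_div_iff₀ hq] at hnorm
    linarith
  · calc qNumRadius q (block2 0 X Y 0)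
        ≤ ‖q‖ * (‖X + Y‖ / 2) + √(1 - ‖q‖ ^ 2) * ‖block2 0 X Y 0‖ :=
          qNumRadius_le_mul_add_mul_norm (by positivity) fun x hx => by
            simpa [hx] using norm_inner_block2_zero_self_le hX hY x
      _ ≤ ‖q‖ / 2 * ‖X + Y‖ + √(1 - ‖q‖ ^ 2) * max ‖X‖ ‖Y‖ := by
          have := mul_le_mul_of_nonneg_left (norm_block2_zero_le X Y)
            (Real.sqrt_nonneg (1 - ‖q‖ ^ 2))
          linarith
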